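/- arXiv:2009.03858 — 13 statements merged into one kernel-verified Lean document; each statement's English description precedes it below -/
import Mathlib

section
/- Consider the ADMC dynamics on a connected graph. Assume α > Π ≥ 0, the inputs u have variation bounded by Π, and x satisfies the ADMC update with parameter α. Let x̄₀ = max_{i∈V} x₀(i), ū_k = max_{i∈V} u_k(i), δ the diameter of G, and T' = ⌈max(x̄₀ − ū₀, 0)/(α − Π)⌉. Then for every k ≥ max(δ + 1, T') and every vertex i ∈ V, the tracking error satisfies |x_k(i) − ū_k| ≤ (δ + 1)·Π + α·δ. -/
open Finset

/-- Propagation of lower bounds along a walk for ADMC dynamics. -/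
lemma admc_walk_bound
    {V : Type*} [Fintype V] [DecidableEq V]
    (G : SimpleGraph V) [DecidableRel G.Adj]
    (α : ℝ) (u : ℕ → V → ℝ) (x : ℕ → V → ℝ)
    (hx : ∀ k i, x (k + 1) i =
      max ((insert i (G.neighborFinset i)).sup' (insert_nonempty i _) (x k) - α) (u k i)) :
    ∀ {j i : V} (p : G.Walk j i) (t : ℕ),
      x t j - α * p.length ≤ x (t + p.length) i := by
  intro j i p
  induction p with
  | nil => intro t; simp
  | @cons a b c h q ih =>
    intro t
    have h1 : x t a - α ≤ x (t + 1) b := by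
      rw [hx]
      have hm : a ∈ insert b (G.neighborFinset b) := by
        simp [SimpleGraph.mem_neighborFinset]
        exact Or.inr h.symm
      have := Finset.le_sup' (x t) hm
      have := le_max_left
        ((insert b (G.neighborFinset b)).sup' (insert_nonempty b _) (x t) - α) (u t b)
      linarith
    have h2 := ih (t + 1)
    have harith : t + (SimpleGraph.Walk.cons h q).length = (t + 1) + q.length := by
      simp [SimpleGraph.Walk.length_cons]; ring
    rw [harith]
    have hlen : ((SimpleGraph.Walk.cons h q).length : ℝ) = (q.length : ℝ) + 1 := by
      rw [SimpleGraph.Walk.length_cons]; push_cast; ring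
    rw [hlen]
    nlinarith [h1, h2]

/-- Bounded variation telescoping. -/
lemma admc_var_bound {V : Type*} (Pi : ℝ) (u : ℕ → V → ℝ)
    (hu : ∀ k i, |u (k + 1) i - u k i| ≤ Pi) :
    ∀ (n m : ℕ) (j : V), |u (m + n) j - u m j| ≤ n * Pi := by
  intro n
  induction n with
  | zero => intro m j; simp
  | succ n ih =>
    intro m j
    have h1 := ih m j
    have h2 := hu (m + n) j
    have : u (m + (n + 1)) j - u m j
        = (u (m + n + 1) j - u (m + n) j) + (u (m + n) j - u m j) := by
      have : m + (n + 1) = m + n + 1 := by ring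
      rw [this]; ring
    rw [this]
    calc |(u (m + n + 1) j - u (m + n) j) + (u (m + n) j - u m j)|
        ≤ |u (m + n + 1) j - u (m + n) j| + |u (m + n) j - u m j| := abs_add_le _ _
      _ ≤ Pi + n * Pi := add_le_add h2 h1
      _ = (n + 1 : ℕ) * Pi := by push_cast; ring

/-- ADMC tracking error bound (Theorem 1, ADMC Protocol). -/
theorem admc_tracking_error
    {V : Type*} [Fintype V] [Nonempty V] [DecidableEq V]
    (G : SimpleGraph V) [DecidableRel G.Adj] (hconn : G.Connected)
    (α Pi : ℝ) (hPi : 0 ≤ Pi) (hα : Pi < α)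
    (u : ℕ → V → ℝ)
    (hu : ∀ k i, |u (k + 1) i - u k i| ≤ Pi)
    (x : ℕ → V → ℝ)
    (hx : ∀ k i, x (k + 1) i =
      max ((insert i (G.neighborFinset i)).sup' (insert_nonempty i _) (x k) - α) (u k i))
    (δ : ℕ) (hδ : δ = Finset.univ.sup fun p : V × V => G.dist p.1 p.2)
    (T' : ℕ)
    (hT' : T' = ⌈max (Finset.univ.sup' univ_nonempty (x 0)
                      - Finset.univ.sup' univ_nonempty (u 0)) 0 / (α - Pi)⌉₊) :
    ∀ k, max (δ + 1) T' ≤ k → ∀ i : V,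
      |x k i - Finset.univ.sup' univ_nonempty (u k)| ≤ ((δ : ℝ) + 1) * Pi + α * δ := by
  set U : ℕ → ℝ := fun k => Finset.univ.sup' univ_nonempty (u k) with hUdef
  set X : ℕ → ℝ := fun k => Finset.univ.sup' univ_nonempty (x k) with hXdef
  have hαpos : 0 < α := lt_of_le_of_lt hPi hα
  -- U decreases by at most Pi per step
  have hUstep : ∀ k, U k - Pi ≤ U (k + 1) := by
    intro k
    obtain ⟨j, -, hj⟩ := Finset.exists_mem_eq_sup' univ_nonempty (u k)
    have h1 : u (k + 1) j ≤ U (k + 1) := Finset.le_sup' _ (Finset.mem_univ j)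
    have h2 := hu k j
    rw [abs_le] at h2
    have : U k = u k j := hj
    linarith [h2.1]
  -- X contracts
  have hXstep : ∀ k, X (k + 1) ≤ max (X k - α) (U k) := by
    intro k
    apply Finset.sup'_le
    intro i _
    rw [hx]
    apply max_le_max
    · have : (insert i (G.neighborFinset i)).sup' (insert_nonempty i _) (x k) ≤ X k := by
        apply Finset.sup'_le
        intro j _
        exact Finset.le_sup' _ (Finset.mem_univ j)
      linarith
    · exact Finset.le_sup' _ (Finset.mem_univ i)
  -- decay estimate
  have hdecay : ∀ k, X k - U k ≤ max (X 0 - U 0 - k * (α - Pi)) Pi := by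
    intro k
    induction k with
    | zero => simp
    | succ k ih =>
      have h1 := hXstep k
      have h2 := hUstep k
      rcases max_cases (X k - α) (U k) with ⟨he, -⟩ | ⟨he, -⟩ <;> rw [he] at h1
      · have : X (k + 1) - U (k + 1) ≤ (X k - U k) - (α - Pi) := by linarith
        calc X (k + 1) - U (k + 1) ≤ (X k - U k) - (α - Pi) := this
          _ ≤ max (X 0 - U 0 - k * (α - Pi)) Pi - (α - Pi) := by linarith
          _ ≤ max (X 0 - U 0 - (k + 1 : ℕ) * (α - Pi)) Pi := by
              rcases max_cases (X 0 - U 0 - k * (α - Pi)) Pi with ⟨he2, -⟩ | ⟨he2, -⟩ <;>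
                rw [he2]
              · have : X 0 - U 0 - k * (α - Pi) - (α - Pi)
                    = X 0 - U 0 - (k + 1 : ℕ) * (α - Pi) := by push_cast; ring
                rw [this]; exact le_max_left _ _
              · have : Pi - (α - Pi) ≤ Pi := by linarith
                exact le_trans this (le_max_right _ _)
      · have : X (k + 1) - U (k + 1) ≤ Pi := by linarith
        exact le_trans this (le_max_right _ _)
  -- for k ≥ T', X k ≤ U k + Pi
  have hupper : ∀ k, T' ≤ k → X k - U k ≤ Pi := by
    intro k hk
    have h1 := hdecay k
    have hT : max (X 0 - U 0) 0 ≤ T' * (α - Pi) := by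
      have h2 : max (X 0 - U 0) 0 / (α - Pi) ≤ (T' : ℝ) := by
        rw [hT']; exact Nat.le_ceil _
      have h3 : 0 < α - Pi := by linarith
      calc max (X 0 - U 0) 0 = max (X 0 - U 0) 0 / (α - Pi) * (α - Pi) := by
            field_simp
        _ ≤ T' * (α - Pi) := by
            apply mul_le_mul_of_nonneg_right h2 (le_of_lt h3)
    have hkT : (T' : ℝ) * (α - Pi) ≤ (k : ℝ) * (α - Pi) := by
      apply mul_le_mul_of_nonneg_right _ (by linarith)
      exact_mod_cast hk
    have : X 0 - U 0 - k * (α - Pi) ≤ 0 := by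
      have := le_max_left (X 0 - U 0) (0 : ℝ)
      linarith
    rcases max_cases (X 0 - U 0 - k * (α - Pi)) Pi with ⟨he, -⟩ | ⟨he, -⟩ <;>
      rw [he] at h1 <;> linarith
  intro k hk i
  have hkδ : δ + 1 ≤ k := le_trans (le_max_left _ _) hk
  have hkT : T' ≤ k := le_trans (le_max_right _ _) hk
  rw [abs_le]
  constructor
  · -- lower bound
    obtain ⟨j, -, hj⟩ := Finset.exists_mem_eq_sup' univ_nonempty (u k)
    obtain ⟨p, hp⟩ := hconn.exists_walk_length_eq_dist j i
    set d := G.dist j i with hd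
    have hdδ : d ≤ δ := by
      rw [hδ]
      have : G.dist j i ≤ Finset.univ.sup fun p : V × V => G.dist p.1 p.2 :=
        Finset.le_sup (f := fun p : V × V => G.dist p.1 p.2) (Finset.mem_univ (j, i))
      exact this
    have hkd : d + 1 ≤ k := le_trans (by omega) hkδ
    set m := k - (d + 1) with hm
    have hmk : m + (d + 1) = k := by omega
    -- x (m+1) j ≥ u m j
    have h1 : u m j ≤ x (m + 1) j := by
      rw [hx]; exact le_max_right _ _
    -- walk bound: x (m+1+d) i ≥ x (m+1) j - α d
    have h2 : x (m + 1) j - α * d ≤ x (m + 1 + d) i := by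
      have := admc_walk_bound G α u x hx p (m + 1)
      rwa [hp] at this
    have hk' : m + 1 + d = k := by omega
    rw [hk'] at h2
    -- variation: u k j ≥ u m j - (d+1) Pi
    have h3 : |u (m + (d + 1)) j - u m j| ≤ (d + 1 : ℕ) * Pi := admc_var_bound Pi u hu (d + 1) m j
    rw [hmk, abs_le] at h3
    have h4 : U k = u k j := hj
    have h5 : (d : ℝ) ≤ (δ : ℝ) := by exact_mod_cast hdδ
    have h6 : ((d : ℝ) + 1) * Pi ≤ ((δ : ℝ) + 1) * Pi := by nlinarith
    have h7 : α * d ≤ α * δ := by nlinarith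
    push_cast at h3
    linarith [h3.1]
  · -- upper bound
    have h1 : x k i ≤ X k := Finset.le_sup' _ (Finset.mem_univ i)
    have h2 := hupper k hkT
    have : (0:ℝ) ≤ (δ : ℝ) := Nat.cast_nonneg δ
    nlinarith
end

section
/- Consider the ADMC dynamics on a connected graph with constant inputs: u_k(i) = u(i) for all k. Assume α > 0 and x satisfies the ADMC update with parameter α. Let x̄₀ = max_{i∈V} x₀(i), ū = max_{i∈V} u(i), δ the diameter of G, and T' = ⌈max(x̄₀ − ū, 0)/α⌉. Then for every k ≥ max(δ + 1, T') and every vertex i ∈ V, the steady-state tracking error satisfies |x_k(i) − ū| ≤ α·δ. -/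
open Finset

/-- ADMC steady-state error bound with constant inputs (Corollary 1). -/
theorem admc_steady_state_error
    {V : Type*} [Fintype V] [Nonempty V] [DecidableEq V]
    (G : SimpleGraph V) [DecidableRel G.Adj] (hconn : G.Connected)
    (α : ℝ) (hα : 0 < α)
    (u : V → ℝ)
    (x : ℕ → V → ℝ)
    (hx : ∀ k i, x (k + 1) i =
      max ((insert i (G.neighborFinset i)).sup' (insert_nonempty i _) (x k) - α) (u i))
    (δ : ℕ) (hδ : δ = Finset.univ.sup fun p : V × V => G.dist p.1 p.2)
    (T' : ℕ)
    (hT' : T' = ⌈max (Finset.univ.sup' univ_nonempty (x 0)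
                      - Finset.univ.sup' univ_nonempty u) 0 / α⌉₊) :
    ∀ k, max (δ + 1) T' ≤ k → ∀ i : V,
      |x k i - Finset.univ.sup' univ_nonempty u| ≤ α * δ := by
  set M0 := Finset.univ.sup' univ_nonempty (x 0) with hM0
  set ub := Finset.univ.sup' univ_nonempty u with hub
  have hstep_ge : ∀ k i, u i ≤ x (k + 1) i := fun k i => by
    rw [hx]; exact le_max_right _ _
  -- Upper bound: x m i ≤ max (M0 - m α) ub
  have upper : ∀ m i, x m i ≤ max (M0 - m * α) ub := by
    intro m
    induction m with
    | zero =>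
      intro i
      have : x 0 i ≤ M0 := Finset.le_sup' (x 0) (mem_univ i)
      simp only [Nat.cast_zero, zero_mul, sub_zero]
      exact le_max_of_le_left this
    | succ m ih =>
      intro i
      rw [hx]
      apply max_le
      · have h1 : (insert i (G.neighborFinset i)).sup' (insert_nonempty i _) (x m)
            ≤ max (M0 - m * α) ub := Finset.sup'_le _ _ fun j _ => ih j
        have h2 : max (M0 - (m : ℝ) * α) ub - α ≤ max (M0 - ((m : ℕ) + 1 : ℕ) * α) ub := by
          push_cast
          rcases le_total (M0 - (m : ℝ) * α) ub with h | h
          · rw [max_eq_right h]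
            have := le_max_right (M0 - ((m : ℝ) + 1) * α) ub
            linarith
          · rw [max_eq_left h]
            have := le_max_left (M0 - ((m : ℝ) + 1) * α) ub
            linarith
        have := sub_le_sub_right h1 α
        exact le_trans this h2
      · exact le_trans (Finset.le_sup' u (mem_univ i)) (le_max_right _ _)
  -- Lower bound propagation along walks
  have walk_lower : ∀ {j i : V} (p : G.Walk j i) (k : ℕ),
      x k j - p.length * α ≤ x (k + p.length) i := by
    intro j i p
    induction p with
    | nil => intro k; simp
    | @cons a b c h q ih =>
      intro k
      have h1 : x k a - α ≤ x (k + 1) b := by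
        rw [hx]
        refine le_trans ?_ (le_max_left _ _)
        have hmem : a ∈ insert b (G.neighborFinset b) := by
          simp only [mem_insert, SimpleGraph.mem_neighborFinset]
          exact Or.inr h.symm
        have := Finset.le_sup' (x k) hmem
        linarith
      have h2 := ih (k + 1)
      have hlen : (SimpleGraph.Walk.cons h q).length = q.length + 1 :=
        SimpleGraph.Walk.length_cons _ _
      rw [hlen]
      have hkeq : k + (q.length + 1) = (k + 1) + q.length := by ring
      rw [hkeq]
      push_cast
      push_cast at h2
      linarith
  intro k hk i
  obtain ⟨j, -, hj⟩ := Finset.exists_mem_eq_sup' univ_nonempty u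
  obtain ⟨p, hp⟩ := (hconn j i).exists_walk_length_eq_dist
  set d := G.dist j i with hd0
  have hd : d ≤ δ := by
    rw [hδ]
    exact Finset.le_sup (f := fun p : V × V => G.dist p.1 p.2) (mem_univ (j, i))
  have hk1 : δ + 1 ≤ k := le_trans (le_max_left _ _) hk
  have hkT : T' ≤ k := le_trans (le_max_right _ _) hk
  have hkd : d + 1 ≤ k := by omega
  have hkeq : k = (k - d - 1 + 1) + d := by omega
  -- lower bound
  have hlow : ub - (d : ℝ) * α ≤ x k i := by
    have h1 := walk_lower p (k - d - 1 + 1)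
    rw [hp] at h1
    have hu : ub ≤ x (k - d - 1 + 1) j := by
      rw [hub, hj]; exact hstep_ge _ j
    rw [← hkeq] at h1
    linarith
  -- upper bound
  have hup : x k i ≤ ub := by
    have h1 := upper k i
    have hceil : max (M0 - ub) 0 ≤ (T' : ℝ) * α := by
      have h2 := Nat.le_ceil (max (M0 - ub) 0 / α)
      rw [← hT'] at h2
      have h3 : max (M0 - ub) 0 = (max (M0 - ub) 0 / α) * α := by
        field_simp
      rw [h3]
      exact mul_le_mul_of_nonneg_right h2 hα.le
    have h4 : M0 - (k : ℝ) * α ≤ ub := by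
      have hk' : (T' : ℝ) * α ≤ (k : ℝ) * α := by
        apply mul_le_mul_of_nonneg_right _ hα.le
        exact_mod_cast hkT
      have h5 := le_max_left (M0 - ub) (0 : ℝ)
      linarith
    exact le_trans h1 (max_le h4 le_rfl)
  have hδα : (d : ℝ) * α ≤ α * δ := by
    rw [mul_comm]
    exact mul_le_mul_of_nonneg_left (Nat.cast_le.mpr hd) hα.le
  have hdnn : (0 : ℝ) ≤ (d : ℝ) * α := by positivity
  rw [abs_le]
  constructor <;> linarith
end

section
/- Consider the EDMC dynamics on a connected graph. Assume the inputs u have variation bounded by Π ≥ 0, Δ is an upper bound on the diameter of G (Δ ≥ δ), and x satisfies the EDMC update with Δ + 1 levels. Then for every k ≥ Δ + 1 and every vertex i ∈ V, the top-level state tracks the maximum with error |x_k(i, Δ) − ū_k| ≤ (Δ + 1)·Π, where ū_k = max_{i∈V} u_k(i). -/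
open Finset

/-- EDMC tracking error bound (Theorem 2, EDMC Protocol). -/
theorem edmc_tracking_error
    {V : Type*} [Fintype V] [Nonempty V] [DecidableEq V]
    (G : SimpleGraph V) [DecidableRel G.Adj] (hconn : G.Connected)
    (Pi : ℝ) (hPi : 0 ≤ Pi)
    (u : ℕ → V → ℝ)
    (hu : ∀ k i, |u (k + 1) i - u k i| ≤ Pi)
    (δ : ℕ) (hδ : δ = Finset.univ.sup fun p : V × V => G.dist p.1 p.2)
    (Δ : ℕ) (hΔ : δ ≤ Δ)
    (x : ℕ → V → Fin (Δ + 1) → ℝ)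
    (hx0 : ∀ k i, x (k + 1) i 0 = u k i)
    (hx : ∀ k i (ℓ : Fin Δ), x (k + 1) i ℓ.succ =
      (insert i (G.neighborFinset i)).sup' (insert_nonempty i _)
        (fun j => x k j ℓ.castSucc)) :
    ∀ k, Δ + 1 ≤ k → ∀ i : V,
      |x k i (Fin.last Δ) - Finset.univ.sup' univ_nonempty (u k)| ≤ ((Δ : ℝ) + 1) * Pi := by
  -- notation for the running max
  set s : ℕ → ℝ := fun k => Finset.univ.sup' univ_nonempty (u k) with hs
  -- upper bound on the states
  have key1 : ∀ ℓ : Fin (Δ + 1), ∀ k i, x (k + ℓ.val + 1) i ℓ ≤ s k := by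
    intro ℓ
    induction ℓ using Fin.induction with
    | zero =>
      intro k i
      have : x (k + 1) i 0 = u k i := hx0 k i
      rw [show k + (0 : Fin (Δ+1)).val + 1 = k + 1 from rfl, this]
      exact Finset.le_sup' (u k) (mem_univ i)
    | succ ℓ ih =>
      intro k i
      rw [show k + (ℓ.succ : Fin (Δ+1)).val + 1 = (k + ℓ.val + 1) + 1 from rfl,
        hx (k + ℓ.val + 1) i ℓ]
      apply Finset.sup'_le
      intro j _
      have := ih k j
      rwa [show k + (ℓ.castSucc : Fin (Δ+1)).val + 1 = k + ℓ.val + 1 from rfl] at this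
  -- lower bound on the states
  have key2 : ∀ ℓ : Fin (Δ + 1), ∀ k i m, G.dist i m ≤ ℓ.val →
      u k m ≤ x (k + ℓ.val + 1) i ℓ := by
    intro ℓ
    induction ℓ using Fin.induction with
    | zero =>
      intro k i m hd
      have : i = m := hconn.dist_eq_zero_iff.mp (Nat.le_zero.mp hd)
      subst this
      rw [show k + (0 : Fin (Δ+1)).val + 1 = k + 1 from rfl, hx0 k i]
    | succ ℓ ih =>
      intro k i m hd
      rw [show k + (ℓ.succ : Fin (Δ+1)).val + 1 = (k + ℓ.val + 1) + 1 from rfl,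
        hx (k + ℓ.val + 1) i ℓ]
      have hd' : G.dist i m ≤ ℓ.val + 1 := hd
      rcases Nat.lt_or_ge (G.dist i m) (ℓ.val + 1) with h | h
      · -- dist i m ≤ ℓ : use j = i
        have hle : u k m ≤ x (k + ℓ.val + 1) i ℓ.castSucc := by
          have := ih k i m (show G.dist i m ≤ ℓ.val from by omega)
          rwa [show k + (ℓ.castSucc : Fin (Δ+1)).val + 1 = k + ℓ.val + 1 from rfl] at this
        exact le_trans hle (Finset.le_sup'
          (fun j => x (k + ℓ.val + 1) j ℓ.castSucc) (mem_insert_self i _))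
      · -- dist i m = ℓ + 1 : take a shortest walk
        have h : G.dist i m = ℓ.val + 1 := le_antisymm hd' h
        obtain ⟨p, hp⟩ := (hconn i m).exists_walk_length_eq_dist
        rw [h] at hp
        cases p with
        | nil => simp at hp
        | cons hadj q =>
          rename_i j
          simp only [SimpleGraph.Walk.length_cons, add_left_inj] at hp
          have hdjm : G.dist j m ≤ ℓ.val := hp ▸ SimpleGraph.dist_le q
          have hle : u k m ≤ x (k + ℓ.val + 1) j ℓ.castSucc := by
            have := ih k j m hdjm
            rwa [show k + (ℓ.castSucc : Fin (Δ+1)).val + 1 = k + ℓ.val + 1 from rfl] at this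
          refine le_trans hle (Finset.le_sup'
            (fun j => x (k + ℓ.val + 1) j ℓ.castSucc) ?_)
          exact mem_insert_of_mem ((G.mem_neighborFinset i j).mpr hadj)
  -- the top level equals the max of old inputs
  have key3 : ∀ k i, x (k + Δ + 1) i (Fin.last Δ) = s k := by
    intro k i
    apply le_antisymm
    · have := key1 (Fin.last Δ) k i
      rwa [show k + (Fin.last Δ).val + 1 = k + Δ + 1 from rfl] at this
    · apply Finset.sup'_le
      intro m _
      have hdist : G.dist i m ≤ Δ := by
        calc G.dist i m ≤ δ := hδ ▸ Finset.le_sup (f := fun p : V × V => G.dist p.1 p.2)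
              (mem_univ (i, m))
        _ ≤ Δ := hΔ
      have := key2 (Fin.last Δ) k i m hdist
      rwa [show k + (Fin.last Δ).val + 1 = k + Δ + 1 from rfl] at this
  -- the running max is Lipschitz
  have step : ∀ m, |s (m + 1) - s m| ≤ Pi := by
    intro m
    rw [abs_sub_le_iff]
    constructor
    · rw [sub_le_iff_le_add]
      apply Finset.sup'_le
      intro i _
      have h := abs_le.mp (hu m i)
      have h2 : u m i ≤ s m := Finset.le_sup' (u m) (mem_univ i)
      linarith [h.1, h.2]
    · rw [sub_le_iff_le_add]
      apply Finset.sup'_le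
      intro i _
      have h := abs_le.mp (hu m i)
      have h2 : u (m + 1) i ≤ s (m + 1) := Finset.le_sup' (u (m + 1)) (mem_univ i)
      linarith [h.1, h.2]
  have tele : ∀ n k₀, |s (k₀ + n) - s k₀| ≤ (n : ℝ) * Pi := by
    intro n
    induction n with
    | zero => intro k₀; simp
    | succ n ih =>
      intro k₀
      have h1 := step (k₀ + n)
      have h2 := ih k₀
      have : |s (k₀ + (n + 1)) - s k₀| ≤ |s (k₀ + n + 1) - s (k₀ + n)| + |s (k₀ + n) - s k₀| := by
        rw [show k₀ + (n + 1) = k₀ + n + 1 from rfl]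
        exact abs_sub_le _ _ _
      push_cast
      calc |s (k₀ + (n + 1)) - s k₀| ≤ Pi + (n : ℝ) * Pi := by linarith
        _ = ((n : ℝ) + 1) * Pi := by ring
  -- conclusion
  intro k hk i
  set k₀ := k - (Δ + 1) with hk₀
  have hkeq : k = k₀ + Δ + 1 := by omega
  have hx_eq : x k i (Fin.last Δ) = s k₀ := by rw [hkeq]; exact key3 k₀ i
  have hks : k = k₀ + (Δ + 1) := by omega
  calc |x k i (Fin.last Δ) - s k| = |s (k₀ + (Δ + 1)) - s k₀| := by
        rw [hx_eq, ← hks, abs_sub_comm]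
    _ ≤ ((Δ + 1 : ℕ) : ℝ) * Pi := tele (Δ + 1) k₀
    _ = ((Δ : ℝ) + 1) * Pi := by push_cast; ring
end

section
/- Consider the EDMC dynamics on a connected graph with constant inputs: u_k(i) = u(i) for all k. Assume Δ is an upper bound on the diameter of G (Δ ≥ δ) and x satisfies the EDMC update with Δ + 1 levels. Then for every k ≥ Δ + 1 and every vertex i ∈ V, the top-level state equals the maximum exactly: x_k(i, Δ) = max_{j∈V} u(j), i.e. the steady-state error is zero. -/
/-!
By induction on the level `ℓ`, the level-`ℓ` state of every vertex is, from step `ℓ + 1` on,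
the maximum of `u` over the closed graph ball of radius `ℓ` around that vertex: level `0`
copies the input, and one max-over-the-closed-neighbourhood step grows a ball of radius `ℓ`
into one of radius `ℓ + 1`. At level `Δ ≥ δ` the ball is the whole vertex set.
-/

open Finset

namespace SimpleGraph

variable {V : Type*} {G : SimpleGraph V}

theorem exists_adj_dist_lt_of_dist_ne_zero {i j : V} (h : G.dist i j ≠ 0) :
    ∃ n, G.Adj i n ∧ G.dist n j < G.dist i j := by
  obtain ⟨p, hp⟩ := exists_walk_of_dist_ne_zero h
  cases p with
  | nil => simp at h
  | @cons _ n _ hadj q =>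
    refine ⟨n, hadj, ?_⟩
    rw [← hp, Walk.length_cons]
    exact Nat.lt_succ_of_le (dist_le q)

variable [Fintype V] (G)

-- `G.dist i j = 0` for unreachable `j`, so the ball also contains the other components.
noncomputable def closedBall (i : V) (r : ℕ) : Finset V := univ.filter fun j => G.dist i j ≤ r

variable {G}

@[simp]
theorem mem_closedBall {i j : V} {r : ℕ} : j ∈ G.closedBall i r ↔ G.dist i j ≤ r := by
  simp [closedBall]

theorem self_mem_closedBall (i : V) (r : ℕ) : i ∈ G.closedBall i r := by
  simp

theorem closedBall_nonempty (i : V) (r : ℕ) : (G.closedBall i r).Nonempty :=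
  ⟨i, self_mem_closedBall i r⟩

theorem Preconnected.closedBall_zero (hG : G.Preconnected) (i : V) :
    G.closedBall i 0 = {i} := by
  ext j
  simp [(hG i j).dist_eq_zero_iff, eq_comm]

theorem closedBall_eq_univ {i : V} {r : ℕ} (h : ∀ j, G.dist i j ≤ r) :
    G.closedBall i r = univ :=
  eq_univ_of_forall fun j => mem_closedBall.mpr (h j)

variable [DecidableEq V] [DecidableRel G.Adj]

theorem closedBall_succ (i : V) (r : ℕ) :
    G.closedBall i (r + 1) = (insert i (G.neighborFinset i)).biUnion (G.closedBall · r) := by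
  ext j
  simp only [mem_closedBall, mem_biUnion, mem_insert, mem_neighborFinset]
  constructor
  · intro hij
    by_cases h0 : G.dist i j = 0
    · exact ⟨i, .inl rfl, h0 ▸ r.zero_le⟩
    · obtain ⟨n, hadj, hlt⟩ := exists_adj_dist_lt_of_dist_ne_zero h0
      exact ⟨n, .inr hadj, by omega⟩
  · rintro ⟨n, rfl | hadj, hnj⟩
    · omega
    · calc G.dist i j ≤ G.dist i n + G.dist n j := hadj.reachable.dist_triangle_left j
        _ ≤ r + 1 := by rw [dist_eq_one_iff_adj.mpr hadj]; omega

end SimpleGraph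

open SimpleGraph

theorem edmc_level_eq_sup'_closedBall {V α : Type*} [Fintype V] [DecidableEq V]
    [SemilatticeSup α] {G : SimpleGraph V} [DecidableRel G.Adj] (hG : G.Preconnected)
    {u : V → α} {Δ : ℕ} {x : ℕ → V → Fin (Δ + 1) → α}
    (hx0 : ∀ k i, x (k + 1) i 0 = u i)
    (hx : ∀ k i (ℓ : Fin Δ), x (k + 1) i ℓ.succ =
      (insert i (G.neighborFinset i)).sup' (insert_nonempty i _) (fun j => x k j ℓ.castSucc))
    (ℓ : Fin (Δ + 1)) (k : ℕ) (i : V) :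
    x (k + ℓ + 1) i ℓ = (G.closedBall i ℓ).sup' (closedBall_nonempty i ℓ) u := by
  induction ℓ using Fin.induction generalizing k i with
  | zero => simp only [Fin.val_zero, hG.closedBall_zero, sup'_singleton]; exact hx0 k i
  | succ ℓ ih =>
    simp only [Fin.val_succ, Fin.val_castSucc] at ih ⊢
    rw [← add_assoc, hx, sup'_congr _ (closedBall_succ i ℓ) fun _ _ => rfl,
      sup'_biUnion _ _ fun j => closedBall_nonempty j ℓ]
    exact sup'_congr _ rfl fun j _ => ih k j

/-- EDMC exact consensus with constant inputs (Corollary 2). -/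
theorem edmc_steady_state_exact
    {V : Type*} [Fintype V] [Nonempty V] [DecidableEq V]
    (G : SimpleGraph V) [DecidableRel G.Adj] (hconn : G.Connected)
    (u : V → ℝ)
    (δ : ℕ) (hδ : δ = Finset.univ.sup fun p : V × V => G.dist p.1 p.2)
    (Δ : ℕ) (hΔ : δ ≤ Δ)
    (x : ℕ → V → Fin (Δ + 1) → ℝ)
    (hx0 : ∀ k i, x (k + 1) i 0 = u i)
    (hx : ∀ k i (ℓ : Fin Δ), x (k + 1) i ℓ.succ =
      (insert i (G.neighborFinset i)).sup' (insert_nonempty i _)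
        (fun j => x k j ℓ.castSucc)) :
    ∀ k, Δ + 1 ≤ k → ∀ i : V,
      x k i (Fin.last Δ) = Finset.univ.sup' univ_nonempty u := by
  intro k hk i
  obtain ⟨k, rfl⟩ : ∃ k', k = k' + Δ + 1 := ⟨k - Δ - 1, by omega⟩
  have hdiam : ∀ j, G.dist i j ≤ Δ := fun j =>
    hδ ▸ le_sup (f := fun p : V × V => G.dist p.1 p.2) (mem_univ (i, j)) |>.trans hΔ
  refine (edmc_level_eq_sup'_closedBall hconn.preconnected hx0 hx (Fin.last Δ) k i).trans ?_
  exact sup'_congr _ (closedBall_eq_univ hdiam) fun _ _ => rfl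
end

section
/- Consider the ADmC (min-consensus) dynamics on a connected graph. Assume α > Π ≥ 0, the inputs u have variation bounded by Π, and x satisfies the ADmC update with parameter α. Let x̲₀ = min_{i∈V} x₀(i), u̲_k = min_{i∈V} u_k(i), δ the diameter of G, and T' = ⌈max(u̲₀ − x̲₀, 0)/(α − Π)⌉. Then for every k ≥ max(δ + 1, T') and every vertex i ∈ V, the tracking error satisfies |x_k(i) − u̲_k| ≤ (δ + 1)·Π + α·δ. -/
open Finset

/-- ADmC (min-consensus) tracking error bound (Theorem 3). -/
theorem admc_min_tracking_error
    {V : Type*} [Fintype V] [Nonempty V] [DecidableEq V]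
    (G : SimpleGraph V) [DecidableRel G.Adj] (hconn : G.Connected)
    (α Pi : ℝ) (hPi : 0 ≤ Pi) (hα : Pi < α)
    (u : ℕ → V → ℝ)
    (hu : ∀ k i, |u (k + 1) i - u k i| ≤ Pi)
    (x : ℕ → V → ℝ)
    (hx : ∀ k i, x (k + 1) i =
      min ((insert i (G.neighborFinset i)).inf' (insert_nonempty i _) (x k) + α) (u k i))
    (δ : ℕ) (hδ : δ = Finset.univ.sup fun p : V × V => G.dist p.1 p.2)
    (T' : ℕ)
    (hT' : T' = ⌈max (Finset.univ.inf' univ_nonempty (u 0)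
                      - Finset.univ.inf' univ_nonempty (x 0)) 0 / (α - Pi)⌉₊) :
    ∀ k, max (δ + 1) T' ≤ k → ∀ i : V,
      |x k i - Finset.univ.inf' univ_nonempty (u k)| ≤ ((δ : ℝ) + 1) * Pi + α * δ := by
  set ub : ℕ → ℝ := fun k => Finset.univ.inf' univ_nonempty (u k) with hub
  set xb : ℕ → ℝ := fun k => Finset.univ.inf' univ_nonempty (x k) with hxb
  -- telescoping bound on inputs
  have tel : ∀ (n m : ℕ) (j : V), u m j ≤ u (m + n) j + n * Pi := by
    intro n
    induction n with
    | zero => intro m j; simp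
    | succ n ih =>
      intro m j
      have h1 := ih m j
      have h2 := abs_le.mp (hu (m + n) j)
      push_cast
      have : m + (n + 1) = (m + n) + 1 := by ring
      rw [this]
      linarith [h2.1, h2.2]
  -- min input varies by at most Pi
  have ubstep : ∀ k, ub (k + 1) ≤ ub k + Pi := by
    intro k
    obtain ⟨j, hj, hje⟩ := Finset.exists_mem_eq_inf' (univ_nonempty (α := V)) (u k)
    have h1 : ub (k + 1) ≤ u (k + 1) j := Finset.inf'_le _ (Finset.mem_univ j)
    have h2 := abs_le.mp (hu k j)
    have h0 : ub k = u k j := hje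
    linarith [h2.1, h2.2]
  -- per-step lower bound on each x value
  have xstep : ∀ k i, min (xb k + α) (ub k) ≤ x (k + 1) i := by
    intro k i
    rw [hx k i]
    apply le_min
    · calc min (xb k + α) (ub k) ≤ xb k + α := min_le_left _ _
        _ ≤ _ := by
            have : xb k ≤ (insert i (G.neighborFinset i)).inf' (insert_nonempty i _) (x k) := by
              apply Finset.le_inf'
              intro b _
              exact Finset.inf'_le _ (Finset.mem_univ b)
            linarith
    · exact le_trans (min_le_right _ _) (Finset.inf'_le _ (Finset.mem_univ i))
  have xbstep : ∀ k, min (xb k + α) (ub k) ≤ xb (k + 1) := by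
    intro k
    apply Finset.le_inf'
    intro b _
    exact xstep k b
  -- lower bound on xb k - ub k
  have lowb : ∀ k : ℕ, min (xb 0 - ub 0 + (k : ℝ) * (α - Pi)) (-Pi) ≤ xb k - ub k := by
    intro k
    induction k with
    | zero => simp [min_le_iff]
    | succ k ih =>
      have h1 := xbstep k
      have h2 := ubstep k
      push_cast
      rcases le_total (xb k + α) (ub k) with h | h
      · rw [min_eq_left h] at h1
        rcases le_total (xb 0 - ub 0 + k * (α - Pi)) (-Pi) with h3 | h3
        · rw [min_eq_left h3] at ih
          rcases le_total (xb 0 - ub 0 + (k + 1) * (α - Pi)) (-Pi) with h4 | h4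
          · rw [min_eq_left h4]; nlinarith
          · rw [min_eq_right h4]; nlinarith
        · rw [min_eq_right h3] at ih
          have h4 : min (xb 0 - ub 0 + ((k : ℝ) + 1) * (α - Pi)) (-Pi) ≤ -Pi :=
            min_le_right _ _
          nlinarith
      · rw [min_eq_right h] at h1
        have h4 : min (xb 0 - ub 0 + ((k : ℝ) + 1) * (α - Pi)) (-Pi) ≤ -Pi :=
          min_le_right _ _
        nlinarith
  -- walk-based upper bound propagation
  have walkb : ∀ (a b : V) (p : G.Walk a b) (m : ℕ),
      x (m + p.length) a ≤ x m b + p.length * α := by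
    intro a b p
    induction p with
    | nil => intro m; simp
    | @cons a c b h q ih =>
      intro m
      have hlen : m + (SimpleGraph.Walk.cons h q).length = (m + q.length) + 1 := by
        simp [SimpleGraph.Walk.length_cons]; ring
      rw [hlen, hx (m + q.length) a]
      have hc : c ∈ insert a (G.neighborFinset a) := by
        simp [SimpleGraph.mem_neighborFinset, h]
      have h1 : (insert a (G.neighborFinset a)).inf' (insert_nonempty a _) (x (m + q.length))
          ≤ x (m + q.length) c := Finset.inf'_le _ hc
      have h2 := ih m
      have h3 : min ((insert a (G.neighborFinset a)).inf' (insert_nonempty a _)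
          (x (m + q.length)) + α) (u (m + q.length) a)
          ≤ (insert a (G.neighborFinset a)).inf' (insert_nonempty a _) (x (m + q.length)) + α :=
        min_le_left _ _
      simp only [SimpleGraph.Walk.length_cons]
      push_cast
      have hαpos : (0 : ℝ) ≤ α := le_of_lt (lt_of_le_of_lt hPi hα)
      nlinarith
  intro k hk i
  have hk1 : δ + 1 ≤ k := le_trans (le_max_left _ _) hk
  have hk2 : T' ≤ k := le_trans (le_max_right _ _) hk
  have hαpos : (0 : ℝ) < α := lt_of_le_of_lt hPi hα
  -- upper bound: x k i ≤ ub k + (δ+1)Π + δα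
  obtain ⟨j, hj, hje⟩ := Finset.exists_mem_eq_inf' (univ_nonempty (α := V)) (u k)
  obtain ⟨p, hp⟩ := hconn.exists_walk_length_eq_dist i j
  have hd : G.dist i j ≤ δ := by
    rw [hδ]
    exact Finset.le_sup (f := fun p : V × V => G.dist p.1 p.2) (Finset.mem_univ (i, j))
  have hdk : p.length + 1 ≤ k := by
    rw [hp]; omega
  obtain ⟨n, hn⟩ : ∃ n, k = n + 1 + p.length := ⟨k - (p.length + 1), by omega⟩
  have hupper : x k i ≤ ub k + ((δ : ℝ) + 1) * Pi + α * δ := by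
    have h1 : x ((n + 1) + p.length) i ≤ x (n + 1) j + p.length * α := walkb i j p (n + 1)
    have h2 : x (n + 1) j ≤ u n j := by
      rw [hx n j]; exact min_le_right _ _
    have h3 := tel (p.length + 1) n j
    have hnk : n + (p.length + 1) = k := by omega
    rw [hnk] at h3
    push_cast at h3
    rw [← hn] at h1
    have h4 : u k j = ub k := hje.symm
    have hdr : (p.length : ℝ) ≤ (δ : ℝ) := by
      exact_mod_cast hp ▸ hd
    nlinarith [hαpos.le]
  -- lower bound: x k i ≥ ub k - Π
  have hceil : max (ub 0 - xb 0) 0 ≤ (T' : ℝ) * (α - Pi) := by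
    have h1 : max (ub 0 - xb 0) 0 / (α - Pi) ≤ (T' : ℝ) := by
      rw [hT']
      exact Nat.le_ceil _
    have h2 : (0 : ℝ) < α - Pi := by linarith
    calc max (ub 0 - xb 0) 0 = max (ub 0 - xb 0) 0 / (α - Pi) * (α - Pi) := by
          field_simp
      _ ≤ (T' : ℝ) * (α - Pi) := by
          exact mul_le_mul_of_nonneg_right h1 h2.le
  have hlow : ub k - Pi ≤ x k i := by
    have h1 := lowb k
    have h2 : -Pi ≤ xb k - ub k := by
      rcases le_total (xb 0 - ub 0 + k * (α - Pi)) (-Pi) with h | h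
      · rw [min_eq_left h] at h1
        have h3 : (T' : ℝ) * (α - Pi) ≤ (k : ℝ) * (α - Pi) := by
          apply mul_le_mul_of_nonneg_right _ (by linarith)
          exact_mod_cast hk2
        have h4 : ub 0 - xb 0 ≤ max (ub 0 - xb 0) 0 := le_max_left _ _
        linarith
      · rw [min_eq_right h] at h1; linarith
    have h3 : xb k ≤ x k i := Finset.inf'_le _ (Finset.mem_univ i)
    linarith
  rw [abs_le]
  constructor
  · have : (0 : ℝ) ≤ (δ : ℝ) := Nat.cast_nonneg _
    nlinarith [hαpos.le]
  · linarith
end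

section
/- Consider the ADmC (min-consensus) dynamics on a connected graph with constant inputs: u_k(i) = u(i) for all k. Assume α > 0 and x satisfies the ADmC update with parameter α. Let x̲₀ = min_{i∈V} x₀(i), u̲ = min_{i∈V} u(i), δ the diameter of G, and T' = ⌈max(u̲ − x̲₀, 0)/α⌉. Then for every k ≥ max(δ + 1, T') and every vertex i ∈ V, the steady-state tracking error satisfies |x_k(i) − u̲| ≤ α·δ. -/
open Finset

/-!
Let `j` minimise the input and `u̲ = u j`. Along a shortest path from `i` to `j` every step of
the update adds at most `α`, and the `u j` clamp enters once the path has been traversed, so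
`x_{k+1}(i) ≤ u̲ + α · dist(i, j) ≤ u̲ + α δ` as soon as `k ≥ dist(i, j)`. Conversely the
global minimum grows by `α` per step until it reaches `u̲`, so
`x_k(i) ≥ min (x̲₀ + k α) u̲`, which is `u̲` once `k ≥ T'`.
-/

namespace SimpleGraph

variable {V : Type*} [Fintype V] [DecidableEq V] (G : SimpleGraph V) [DecidableRel G.Adj]

def IsADmC (α : ℝ) (u : V → ℝ) (x : ℕ → V → ℝ) : Prop :=
  ∀ k i, x (k + 1) i =
    min ((insert i (G.neighborFinset i)).inf' (insert_nonempty i _) (x k) + α) (u i)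

variable {G} {α : ℝ} {u : V → ℝ} {x : ℕ → V → ℝ}

namespace IsADmC

theorem le_input (hx : G.IsADmC α u x) (k : ℕ) (i : V) : x (k + 1) i ≤ u i := by
  rw [hx]
  exact min_le_right _ _

theorem le_of_adj (hx : G.IsADmC α u x) (k : ℕ) {i w : V} (hiw : G.Adj i w) :
    x (k + 1) i ≤ x k w + α := by
  have hw : w ∈ insert i (G.neighborFinset i) :=
    mem_insert_of_mem ((G.mem_neighborFinset i w).mpr hiw)
  rw [hx]
  exact (min_le_left _ _).trans (by gcongr; exact inf'_le _ hw)

theorem le_add_length (hx : G.IsADmC α u x) {i j : V} (p : G.Walk i j) :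
    ∀ k, p.length ≤ k → x (k + 1) i ≤ u j + α * p.length := by
  induction p with
  | nil => simpa using fun k => hx.le_input k _
  | @cons a w b hiw q ih =>
    rintro (_ | k) hk
    · simp at hk
    · have hq := ih k (by simp at hk; omega)
      calc x (k + 1 + 1) a ≤ x (k + 1) w + α := hx.le_of_adj (k + 1) hiw
        _ ≤ u b + α * (q.cons hiw).length := by push_cast [Walk.length_cons]; linarith

theorem le_add_dist (hx : G.IsADmC α u x) {i j : V} (hij : G.Reachable i j) {k : ℕ}
    (hk : G.dist i j ≤ k) : x (k + 1) i ≤ u j + α * G.dist i j := by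
  obtain ⟨p, hp⟩ := hij.exists_walk_length_eq_dist
  simpa [hp] using hx.le_add_length p k (hp ▸ hk)

theorem min_add_mul_le (hx : G.IsADmC α u x) (hα : 0 ≤ α) {b c : ℝ} (hu : ∀ i, b ≤ u i)
    (h0 : ∀ i, c ≤ x 0 i) : ∀ (k : ℕ) i, min (c + k * α) b ≤ x k i := by
  intro k
  induction k with
  | zero => simpa using fun i => (min_le_left _ _).trans (h0 i)
  | succ k ih =>
    intro i
    rw [hx]
    refine le_min ?_ ((min_le_right _ _).trans (hu i))
    calc min (c + (k + 1 : ℕ) * α) b ≤ min (c + k * α + α) (b + α) := by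
          push_cast
          rw [add_one_mul, ← add_assoc]
          exact min_le_min_left _ (le_add_of_nonneg_right hα)
      _ = min (c + k * α) b + α := min_add_add_right _ _ _
      _ ≤ (insert i (G.neighborFinset i)).inf' (insert_nonempty i _) (x k) + α := by
          gcongr
          exact le_inf' _ _ fun j _ => ih j

theorem le_of_sub_le_mul (hx : G.IsADmC α u x) (hα : 0 ≤ α) {b c : ℝ} (hu : ∀ i, b ≤ u i)
    (h0 : ∀ i, c ≤ x 0 i) {k : ℕ} (hk : b - c ≤ k * α) (i : V) : b ≤ x k i :=
  (le_min (by linarith) le_rfl).trans (hx.min_add_mul_le hα hu h0 k i)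

end IsADmC

end SimpleGraph

theorem sub_le_mul_of_natCeil_le {a α : ℝ} (hα : 0 < α) {k : ℕ} (hk : ⌈max a 0 / α⌉₊ ≤ k) :
    a ≤ k * α := by
  have h : max a 0 / α ≤ k := (Nat.le_ceil _).trans (by exact_mod_cast hk)
  rw [div_le_iff₀ hα] at h
  exact (le_max_left a 0).trans h

/-- ADmC (min-consensus) steady-state error bound with constant inputs (Corollary 3). -/
theorem admc_min_steady_state_error
    {V : Type*} [Fintype V] [Nonempty V] [DecidableEq V]
    (G : SimpleGraph V) [DecidableRel G.Adj] (hconn : G.Connected)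
    (α : ℝ) (hα : 0 < α)
    (u : V → ℝ)
    (x : ℕ → V → ℝ)
    (hx : ∀ k i, x (k + 1) i =
      min ((insert i (G.neighborFinset i)).inf' (insert_nonempty i _) (x k) + α) (u i))
    (δ : ℕ) (hδ : δ = Finset.univ.sup fun p : V × V => G.dist p.1 p.2)
    (T' : ℕ)
    (hT' : T' = ⌈max (Finset.univ.inf' univ_nonempty u
                      - Finset.univ.inf' univ_nonempty (x 0)) 0 / α⌉₊) :
    ∀ k, max (δ + 1) T' ≤ k → ∀ i : V,
      |x k i - Finset.univ.inf' univ_nonempty u| ≤ α * δ := by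
  have hx : G.IsADmC α u x := hx
  obtain ⟨j, -, hj⟩ := exists_mem_eq_inf' univ_nonempty u
  rintro k hk i
  obtain ⟨n, rfl⟩ : ∃ n, k = n + 1 := ⟨k - 1, by omega⟩
  have hdist : G.dist i j ≤ δ :=
    hδ ▸ le_sup (f := fun p : V × V => G.dist p.1 p.2) (mem_univ (i, j))
  have hupper : x (n + 1) i ≤ u j + α * δ :=
    (hx.le_add_dist (hconn i j) (by omega)).trans (by gcongr)
  have hlower : univ.inf' univ_nonempty u ≤ x (n + 1) i :=
    hx.le_of_sub_le_mul hα.le (fun i => inf'_le _ (mem_univ i)) (fun i => inf'_le _ (mem_univ i))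
      (sub_le_mul_of_natCeil_le hα (hT' ▸ le_of_max_le_right hk)) i
  rw [hj] at hlower ⊢
  rw [abs_le]
  exact ⟨by linarith [mul_nonneg hα.le δ.cast_nonneg], by linarith⟩
end

section
/- Consider the EDmC (min-consensus) dynamics on a connected graph with constant inputs: u_k(i) = u(i) for all k. Assume Δ is an upper bound on the diameter of G (Δ ≥ δ) and x satisfies the EDmC update with Δ + 1 levels. Then for every k ≥ Δ + 1 and every vertex i ∈ V, the top-level state equals the minimum exactly: x_k(i, Δ) = min_{j∈V} u(j), i.e. the steady-state error is zero. -/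
open Finset

/-- EDmC (min-consensus) exact consensus with constant inputs (Corollary 4). -/
theorem edmc_min_steady_state_exact
    {V : Type*} [Fintype V] [Nonempty V] [DecidableEq V]
    (G : SimpleGraph V) [DecidableRel G.Adj] (hconn : G.Connected)
    (u : V → ℝ)
    (δ : ℕ) (hδ : δ = Finset.univ.sup fun p : V × V => G.dist p.1 p.2)
    (Δ : ℕ) (hΔ : δ ≤ Δ)
    (x : ℕ → V → Fin (Δ + 1) → ℝ)
    (hx0 : ∀ k i, x (k + 1) i 0 = u i)
    (hx : ∀ k i (ℓ : Fin Δ), x (k + 1) i ℓ.succ =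
      (insert i (G.neighborFinset i)).inf' (insert_nonempty i _)
        (fun j => x k j ℓ.castSucc)) :
    ∀ k, Δ + 1 ≤ k → ∀ i : V,
      x k i (Fin.last Δ) = Finset.univ.inf' univ_nonempty u := by
  classical
  -- ball of radius ℓ around i
  set S : V → ℕ → Finset V := fun i ℓ => Finset.univ.filter (fun j => G.dist i j ≤ ℓ) with hS
  have hmem : ∀ i ℓ, i ∈ S i ℓ := by
    intro i ℓ; simp [hS, SimpleGraph.dist_self]
  have hSne : ∀ i ℓ, (S i ℓ).Nonempty := fun i ℓ => ⟨i, hmem i ℓ⟩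
  -- key lemma
  have key : ∀ ℓ : ℕ, ∀ h : ℓ < Δ + 1, ∀ k i,
      x (k + ℓ + 1) i ⟨ℓ, h⟩ = (S i ℓ).inf' (hSne i ℓ) u := by
    intro ℓ
    induction ℓ with
    | zero =>
      intro h k i
      have hset : S i 0 = {i} := by
        ext j
        simp only [hS, Finset.mem_filter, Finset.mem_univ, true_and, Nat.le_zero,
          Finset.mem_singleton, hconn.dist_eq_zero_iff]
        exact ⟨fun h => h.symm, fun h => h.symm⟩
      have : (⟨0, h⟩ : Fin (Δ + 1)) = 0 := rfl
      rw [this, hx0]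
      simp [hset]
    | succ ℓ ih =>
      intro h k i
      have hℓΔ : ℓ < Δ := Nat.lt_of_succ_lt_succ h
      have hcast : (⟨ℓ + 1, h⟩ : Fin (Δ + 1)) = (⟨ℓ, hℓΔ⟩ : Fin Δ).succ := rfl
      have hcast2 : ((⟨ℓ, hℓΔ⟩ : Fin Δ).castSucc) = (⟨ℓ, Nat.lt_succ_of_lt hℓΔ⟩ : Fin (Δ + 1)) := rfl
      have hk : k + (ℓ + 1) + 1 = (k + 1 + ℓ) + 1 := by omega
      rw [hk, hcast, hx, ]
      have hrw : ∀ j : V, x (k + 1 + ℓ) j ((⟨ℓ, hℓΔ⟩ : Fin Δ).castSucc)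
          = (S j ℓ).inf' (hSne j ℓ) u := by
        intro j
        have hk2 : k + 1 + ℓ = k + ℓ + 1 := by omega
        rw [hcast2, hk2]
        exact ih _ k j
      simp only [hrw]
      apply le_antisymm
      · -- inf over neighborhood of inf over balls ≤ inf over ball(i, ℓ+1)
        apply Finset.le_inf'
        intro w hw
        simp only [hS, Finset.mem_filter, Finset.mem_univ, true_and] at hw
        by_cases hdw : G.dist i w ≤ ℓ
        · refine le_trans (Finset.inf'_le _ (Finset.mem_insert_self i _)) ?_
          exact Finset.inf'_le _ (by simp [hS, hdw])
        · have hpos : G.dist i w ≠ 0 := by omega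
          obtain ⟨p, hp⟩ := SimpleGraph.exists_walk_of_dist_ne_zero hpos
          cases p with
          | nil => simp [SimpleGraph.dist_self] at hpos
          | cons hadj q =>
            rename_i j
            have hq : G.dist j w ≤ ℓ := by
              have := SimpleGraph.dist_le q
              simp [SimpleGraph.Walk.length_cons] at hp
              omega
            have hjmem : j ∈ insert i (G.neighborFinset i) :=
              Finset.mem_insert_of_mem ((SimpleGraph.mem_neighborFinset G i j).mpr hadj)
            exact le_trans (Finset.inf'_le _ hjmem) (Finset.inf'_le _ (by simp [hS, hq]))
      · -- other direction
        apply Finset.le_inf'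
        intro j hj
        apply Finset.le_inf'
        intro w hw
        simp only [hS, Finset.mem_filter, Finset.mem_univ, true_and] at hw
        have hij : G.dist i j ≤ 1 := by
          rcases Finset.mem_insert.mp hj with h1 | h1
          · subst h1; simp [SimpleGraph.dist_self]
          · exact le_of_eq (SimpleGraph.dist_eq_one_iff_adj.mpr
              ((SimpleGraph.mem_neighborFinset G i j).mp h1))
        have : G.dist i w ≤ ℓ + 1 := by
          have := hconn.dist_triangle (u := i) (v := j) (w := w)
          omega
        exact Finset.inf'_le _ (by simp [hS, this])
  -- ball of radius Δ is everything
  have hball : ∀ i, S i Δ = Finset.univ := by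
    intro i
    ext j
    simp only [hS, Finset.mem_filter, Finset.mem_univ, true_and, iff_true]
    calc G.dist i j ≤ δ := hδ ▸ Finset.le_sup (f := fun p : V × V => G.dist p.1 p.2)
          (Finset.mem_univ (i, j))
      _ ≤ Δ := hΔ
  intro k hk i
  obtain ⟨k', rfl⟩ : ∃ k', k = k' + Δ + 1 := ⟨k - (Δ + 1), by omega⟩
  have hlast : (Fin.last Δ) = (⟨Δ, Nat.lt_succ_self Δ⟩ : Fin (Δ + 1)) := rfl
  rw [hlast, key Δ (Nat.lt_succ_self Δ) k' i]
  congr 1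
  exact hball i
end

section
/- Consider the ADMC dynamics on any graph G on a nonempty finite vertex set (connectedness not required). If x satisfies the ADMC update with parameter α > 0 and inputs u, then the maximum state satisfies the scalar recursion x̄_{k+1} = max( x̄_k − α , ū_k ) for all k ∈ ℕ, where x̄_k = max_{i∈V} x_k(i) and ū_k = max_{i∈V} u_k(i). -/
open Finset

/-- The maximum state under the ADMC update obeys the scalar recursion
x̄_{k+1} = max (x̄_k - α) ū_k. -/
theorem admc_max_state_recursion
    {V : Type*} [Fintype V] [Nonempty V] [DecidableEq V]
    (G : SimpleGraph V) [DecidableRel G.Adj]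
    (α : ℝ) (hα : 0 < α)
    (u : ℕ → V → ℝ)
    (x : ℕ → V → ℝ)
    (hx : ∀ k i, x (k + 1) i =
      max ((insert i (G.neighborFinset i)).sup' (insert_nonempty i _) (x k) - α) (u k i)) :
    ∀ k : ℕ,
      Finset.univ.sup' univ_nonempty (x (k + 1))
        = max (Finset.univ.sup' univ_nonempty (x k) - α)
              (Finset.univ.sup' univ_nonempty (u k)) := by
  intro k
  apply le_antisymm
  · apply Finset.sup'_le
    intro i _
    rw [hx]
    apply max_le_max
    · apply sub_le_sub_right
      exact Finset.sup'_le _ _ fun j _ => Finset.le_sup' (x k) (mem_univ j)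
    · exact Finset.le_sup' (u k) (mem_univ i)
  · apply max_le
    · obtain ⟨i, _, hi⟩ := Finset.exists_mem_eq_sup' univ_nonempty (x k)
      refine le_trans ?_ (Finset.le_sup' (x (k+1)) (mem_univ i))
      rw [hx]
      refine le_trans ?_ (le_max_left _ _)
      apply sub_le_sub_right
      rw [hi]
      exact Finset.le_sup' (x k) (mem_insert_self i _)
    · obtain ⟨i, _, hi⟩ := Finset.exists_mem_eq_sup' univ_nonempty (u k)
      refine le_trans ?_ (Finset.le_sup' (x (k+1)) (mem_univ i))
      rw [hx, hi]
      exact le_max_right _ _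
end

section
/- Consider the ADMC dynamics on any graph G on a nonempty finite vertex set. Assume α > Π ≥ 0, the inputs u have variation bounded by Π, and x satisfies the ADMC update with parameter α. Let x̄_k = max_{i∈V} x_k(i), ū_k = max_{i∈V} u_k(i), and T' = ⌈max(x̄₀ − ū₀, 0)/(α − Π)⌉. Then for every k ≥ max(T', 1) one has x̄_k = ū_{k−1}, and consequently x̄_k ≤ ū_k + Π. -/
open Finset

/-- After the convergence time T', the maximum ADMC state equals the delayed input
maximum: x̄_k = ū_{k-1}, hence x̄_k ≤ ū_k + Π. -/
theorem admc_max_state_reaches_input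
    {V : Type*} [Fintype V] [Nonempty V] [DecidableEq V]
    (G : SimpleGraph V) [DecidableRel G.Adj]
    (α Pi : ℝ) (hPi : 0 ≤ Pi) (hα : Pi < α)
    (u : ℕ → V → ℝ)
    (hu : ∀ k i, |u (k + 1) i - u k i| ≤ Pi)
    (x : ℕ → V → ℝ)
    (hx : ∀ k i, x (k + 1) i =
      max ((insert i (G.neighborFinset i)).sup' (insert_nonempty i _) (x k) - α) (u k i))
    (T' : ℕ)
    (hT' : T' = ⌈max (Finset.univ.sup' univ_nonempty (x 0)
                      - Finset.univ.sup' univ_nonempty (u 0)) 0 / (α - Pi)⌉₊) :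
    ∀ k, max T' 1 ≤ k →
      Finset.univ.sup' univ_nonempty (x k) = Finset.univ.sup' univ_nonempty (u (k - 1)) ∧
      Finset.univ.sup' univ_nonempty (x k) ≤ Finset.univ.sup' univ_nonempty (u k) + Pi := by
  have hapos : (0:ℝ) < α - Pi := sub_pos.mpr hα
  set X : ℕ → ℝ := fun k => Finset.univ.sup' univ_nonempty (x k) with hXdef
  set U : ℕ → ℝ := fun k => Finset.univ.sup' univ_nonempty (u k) with hUdef
  have hXle : ∀ k i, x k i ≤ X k := fun k i => Finset.le_sup' (x k) (mem_univ i)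
  have hUle : ∀ k i, u k i ≤ U k := fun k i => Finset.le_sup' (u k) (mem_univ i)
  have hXrec : ∀ k, X (k+1) = max (X k - α) (U k) := by
    intro k
    apply le_antisymm
    · apply Finset.sup'_le
      intro i _
      rw [hx k i]
      apply max_le_max
      · exact sub_le_sub_right (Finset.sup'_le _ _ (fun j _ => hXle k j)) α
      · exact hUle k i
    · apply max_le
      · obtain ⟨i0, _, hi0⟩ := Finset.exists_mem_eq_sup' (univ_nonempty (α := V)) (x k)
        have h1 : X k - α ≤ x (k+1) i0 := by
          rw [hx k i0]
          refine le_max_of_le_left (sub_le_sub_right ?_ α)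
          calc X k = x k i0 := hi0
          _ ≤ _ := Finset.le_sup' (x k) (mem_insert_self i0 _)
        exact h1.trans (hXle (k+1) i0)
      · obtain ⟨i1, _, hi1⟩ := Finset.exists_mem_eq_sup' (univ_nonempty (α := V)) (u k)
        have h1 : U k ≤ x (k+1) i1 := by
          rw [hx k i1]
          calc U k = u k i1 := hi1
          _ ≤ _ := le_max_right _ _
        exact h1.trans (hXle (k+1) i1)
  have hUstep : ∀ k, U k ≤ U (k+1) + Pi := by
    intro k
    apply Finset.sup'_le
    intro i _
    have h := (abs_le.mp (hu k i)).1
    have : u k i ≤ u (k+1) i + Pi := by linarith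
    exact this.trans (by linarith [hUle (k+1) i])
  have hUstep' : ∀ k, U (k+1) ≤ U k + Pi := by
    intro k
    apply Finset.sup'_le
    intro i _
    have h := (abs_le.mp (hu k i)).2
    have : u (k+1) i ≤ u k i + Pi := by linarith
    exact this.trans (by linarith [hUle k i])
  have key : ∀ m : ℕ, X m - U m ≤ max (X 0 - U 0 - m * (α - Pi)) Pi := by
    intro m
    induction m with
    | zero => simp
    | succ m ih =>
      have h1 := hXrec m
      have h2 := hUstep m
      have hcast : ((m+1 : ℕ) : ℝ) = (m:ℝ) + 1 := by push_cast; ring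
      rcases le_total (X m - α) (U m) with h | h
      · have hx1 : X (m+1) = U m := by rw [h1, max_eq_right h]
        have : X (m+1) - U (m+1) ≤ Pi := by rw [hx1]; linarith
        exact this.trans (le_max_right _ _)
      · have hx1 : X (m+1) = X m - α := by rw [h1, max_eq_left h]
        have hD : X (m+1) - U (m+1) ≤ X m - U m - (α - Pi) := by
          rw [hx1]; linarith
        rcases le_total (X 0 - U 0 - m * (α - Pi)) Pi with hc | hc
        · have : X m - U m ≤ Pi := le_trans ih (by rw [max_eq_right hc])
          refine le_trans ?_ (le_max_right _ _)
          linarith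
        · have : X m - U m ≤ X 0 - U 0 - m * (α - Pi) :=
            le_trans ih (by rw [max_eq_left hc])
          refine le_trans ?_ (le_max_left _ _)
          rw [hcast]; linarith
  -- main argument
  intro k hk
  have hT'k : T' ≤ k := le_trans (le_max_left _ _) hk
  have h1k : 1 ≤ k := le_trans (le_max_right _ _) hk
  obtain ⟨m, rfl⟩ : ∃ m, k = m + 1 := ⟨k - 1, (Nat.succ_pred_eq_of_pos h1k).symm⟩
  -- bound on m : m + 1 ≥ T'
  have hceil : max (X 0 - U 0) 0 / (α - Pi) ≤ (T' : ℝ) := hT' ▸ Nat.le_ceil _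
  have hTb : max (X 0 - U 0) 0 ≤ (T' : ℝ) * (α - Pi) := (div_le_iff₀ hapos).mp hceil
  have hmT : (T' : ℝ) ≤ (m : ℝ) + 1 := by exact_mod_cast hT'k
  have hXU : X 0 - U 0 ≤ ((m:ℝ) + 1) * (α - Pi) := by
    nlinarith [le_max_left (X 0 - U 0) (0:ℝ), hTb]
  have hkey := key m
  have hbound : X m - U m ≤ α := by
    rcases le_total (X 0 - U 0 - m * (α - Pi)) Pi with hc | hc
    · have := le_trans hkey (by rw [max_eq_right hc] : max (X 0 - U 0 - m * (α - Pi)) Pi ≤ Pi)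
      linarith
    · have := le_trans hkey (by rw [max_eq_left hc] : max (X 0 - U 0 - m * (α - Pi)) Pi ≤ X 0 - U 0 - m * (α - Pi))
      nlinarith
  have hEq : X (m+1) = U m := by
    rw [hXrec m, max_eq_right (by linarith)]
  have hsub : m + 1 - 1 = m := rfl
  refine ⟨by rw [hsub]; exact hEq, ?_⟩
  show X (m+1) ≤ U (m+1) + Pi
  rw [hEq]
  exact hUstep m
end

section
/- Consider the ADMC dynamics on a connected graph G with diameter δ. If x satisfies the ADMC update with parameter α > 0, then the maximum value propagates through the network within δ steps losing at most α per step: for every k ∈ ℕ and every vertex i ∈ V, x_{k+δ}(i) ≥ x̄_k − δ·α, where x̄_k = max_{j∈V} x_k(j). -/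
open Finset

/-- Under the ADMC update on a connected graph with diameter δ, the maximum value
propagates through the network within δ steps losing at most α per step. -/
theorem admc_max_propagation
    {V : Type*} [Fintype V] [Nonempty V] [DecidableEq V]
    (G : SimpleGraph V) [DecidableRel G.Adj] (hconn : G.Connected)
    (α : ℝ) (hα : 0 < α)
    (u : ℕ → V → ℝ)
    (x : ℕ → V → ℝ)
    (hx : ∀ k i, x (k + 1) i =
      max ((insert i (G.neighborFinset i)).sup' (insert_nonempty i _) (x k) - α) (u k i))
    (δ : ℕ) (hδ : δ = Finset.univ.sup fun p : V × V => G.dist p.1 p.2) :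
    ∀ k : ℕ, ∀ i : V,
      x (k + δ) i ≥ Finset.univ.sup' univ_nonempty (x k) - (δ : ℝ) * α := by
  -- one-step lemma
  have step : ∀ k (i j : V), j = i ∨ G.Adj i j → x (k + 1) i ≥ x k j - α := by
    intro k i j hj
    rw [hx k i]
    refine le_trans ?_ (le_max_left _ _)
    apply sub_le_sub_right
    apply Finset.le_sup'
    rcases hj with h | h
    · simp [h]
    · simp [SimpleGraph.mem_neighborFinset, h]
  -- propagation along a walk
  have walk : ∀ (j i : V) (p : G.Walk j i) (k : ℕ),
      x (k + p.length) i ≥ x k j - (p.length : ℝ) * α := by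
    intro j i p
    induction p with
    | nil => intro k; simp
    | cons h q ih =>
      intro k
      have h1 := ih (k + 1)
      have h2 := step k _ _ (Or.inr h.symm)
      simp only [SimpleGraph.Walk.length_cons]
      have hk : k + (q.length + 1) = k + 1 + q.length := by ring
      rw [hk]
      push_cast
      linarith
  -- padding lemma
  have pad : ∀ (i : V) (k m : ℕ), x (k + m) i ≥ x k i - (m : ℝ) * α := by
    intro i k m
    induction m with
    | zero => simp
    | succ n ih =>
      have := step (k + n) i i (Or.inl rfl)
      have hk : k + (n + 1) = k + n + 1 := by ring
      rw [hk]
      push_cast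
      linarith
  intro k i
  obtain ⟨j, _, hj⟩ := Finset.exists_mem_eq_sup' (univ_nonempty) (x k)
  rw [hj]
  have hreach : G.Reachable j i := hconn j i
  obtain ⟨p, hp⟩ := hreach.exists_walk_length_eq_dist
  have hd : G.dist j i ≤ δ := by
    rw [hδ]
    exact Finset.le_sup (f := fun p : V × V => G.dist p.1 p.2)
      (Finset.mem_univ (j, i))
  have h1 := walk j i p k
  rw [hp] at h1
  have h2 := pad i (k + G.dist j i) (δ - G.dist j i)
  have hk : k + G.dist j i + (δ - G.dist j i) = k + δ := by omega
  rw [hk] at h2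
  have hc : ((δ - G.dist j i : ℕ) : ℝ) = (δ : ℝ) - (G.dist j i : ℝ) := by
    push_cast [Nat.cast_sub hd]; ring
  rw [hc] at h2
  have : (G.dist j i : ℝ) * α + ((δ : ℝ) - (G.dist j i : ℝ)) * α = (δ : ℝ) * α := by ring
  linarith
end

section
/- Consider the ADMC dynamics on a connected graph G with diameter δ. Assume the inputs u have variation bounded by Π ≥ 0 and x satisfies the ADMC update with parameter α > 0. Then for every k ≥ δ + 1 and every vertex i ∈ V, the state is lower bounded as x_k(i) ≥ ū_k − (δ + 1)·Π − α·δ, where ū_k = max_{j∈V} u_k(j). -/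
open Finset

/-- Under the ADMC update on a connected graph with diameter δ and inputs with
variation bounded by Π, after δ+1 steps every state is lower bounded by
ū_k − (δ+1)Π − αδ. -/
theorem admc_state_lower_bound
    {V : Type*} [Fintype V] [Nonempty V] [DecidableEq V]
    (G : SimpleGraph V) [DecidableRel G.Adj] (hconn : G.Connected)
    (α Pi : ℝ) (hPi : 0 ≤ Pi) (hα : 0 < α)
    (u : ℕ → V → ℝ)
    (hu : ∀ k i, |u (k + 1) i - u k i| ≤ Pi)
    (x : ℕ → V → ℝ)
    (hx : ∀ k i, x (k + 1) i =
      max ((insert i (G.neighborFinset i)).sup' (insert_nonempty i _) (x k) - α) (u k i))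
    (δ : ℕ) (hδ : δ = Finset.univ.sup fun p : V × V => G.dist p.1 p.2) :
    ∀ k, δ + 1 ≤ k → ∀ i : V,
      x k i ≥ Finset.univ.sup' univ_nonempty (u k) - ((δ : ℝ) + 1) * Pi - α * δ := by
  -- basic step bound
  have step : ∀ t (i j : V), j ∈ insert i (G.neighborFinset i) →
      x t j - α ≤ x (t + 1) i := by
    intro t i j hj
    rw [hx]
    exact le_max_of_le_left (by
      have := Finset.le_sup' (x t) hj
      linarith)
  have stepu : ∀ t (i : V), u t i ≤ x (t + 1) i := by
    intro t i; rw [hx]; exact le_max_right _ _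
  -- propagation along a walk
  have walk : ∀ (j i : V) (p : G.Walk j i) (t : ℕ),
      x t j - α * p.length ≤ x (t + p.length) i := by
    intro j i p
    induction p with
    | nil => intro t; simp
    | cons h q ih =>
      intro t
      rename_i a b c
      have h1 : x t a - α ≤ x (t + 1) b := by
        apply step
        simp [SimpleGraph.mem_neighborFinset]
        exact Or.inr h.symm
      have h2 := ih (t + 1)
      have hlen : t + (SimpleGraph.Walk.cons h q).length = (t + 1) + q.length := by
        simp [SimpleGraph.Walk.length_cons]; ring
      rw [hlen]
      have : (((SimpleGraph.Walk.cons h q).length : ℝ)) = (q.length : ℝ) + 1 := by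
        simp [SimpleGraph.Walk.length_cons]
      rw [this]
      nlinarith [hα.le]
  -- input variation
  have uvar : ∀ (m n : ℕ) (j : V), m ≤ n → u n j - (↑(n - m) : ℝ) * Pi ≤ u m j := by
    intro m n j h
    induction n with
    | zero => simp_all
    | succ n ih =>
      rcases Nat.lt_or_ge m (n + 1) with hm | hm
      · have hmn : m ≤ n := Nat.lt_succ_iff.mp hm
        have h1 := ih hmn
        have h2 := abs_le.mp (hu n j)
        have hc : ((n + 1 - m : ℕ) : ℝ) = ((n - m : ℕ) : ℝ) + 1 := by
          rw [Nat.succ_sub hmn]; push_cast; ring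
        rw [hc]
        nlinarith
      · have : m = n + 1 := le_antisymm h hm
        subst this; simp
  intro k hk i
  -- choose maximizer j of u k
  obtain ⟨j, -, hj⟩ := Finset.exists_mem_eq_sup' univ_nonempty (u k)
  rw [hj]
  set d := G.dist j i with hd
  have hdδ : d ≤ δ := by
    rw [hδ]
    exact Finset.le_sup (f := fun p : V × V => G.dist p.1 p.2) (Finset.mem_univ (j, i))
  obtain ⟨p, hp⟩ := hconn.exists_walk_length_eq_dist j i
  have hdk : d + 1 ≤ k := le_trans (by omega) hk
  set m := k - (d + 1) with hm
  have hmk : m + 1 + d = k := by omega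
  have h1 : x (m + 1) j - α * d ≤ x (m + 1 + d) i := by
    have := walk j i p (m + 1)
    rwa [hp, ← hd] at this
  have h2 : u m j ≤ x (m + 1) j := stepu m j
  have h3 : u k j - (↑(k - m) : ℝ) * Pi ≤ u m j := uvar m k j (by omega)
  have hkm : (↑(k - m) : ℝ) = (d : ℝ) + 1 := by
    have : k - m = d + 1 := by omega
    rw [this]; push_cast; ring
  rw [hkm] at h3
  rw [hmk] at h1
  have hdr : (d : ℝ) ≤ (δ : ℝ) := by exact_mod_cast hdδ
  nlinarith [hα.le]
end

section
/- Consider the EDMC dynamics on a connected graph G. For every level ℓ with 0 ≤ ℓ ≤ Δ, every time k ≥ ℓ + 1 and every vertex i ∈ V, the level-ℓ state equals the delayed maximum of the inputs over the ball of radius ℓ around i: x_k(i, ℓ) = max{ u_{k−ℓ−1}(j) : j ∈ V, dist_G(i, j) ≤ ℓ }, where dist_G is the graph distance in G. -/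
open Finset

open scoped Classical in
/-- Under the EDMC update, the level-ℓ state at time k ≥ ℓ+1 equals the delayed
maximum of the inputs over the ball of radius ℓ. -/
theorem edmc_level_state_eq_ball_max
    {V : Type*} [Fintype V] [Nonempty V] [DecidableEq V]
    (G : SimpleGraph V) [DecidableRel G.Adj] (hconn : G.Connected)
    (Δ : ℕ)
    (u : ℕ → V → ℝ)
    (x : ℕ → V → Fin (Δ + 1) → ℝ)
    (hx0 : ∀ k i, x (k + 1) i 0 = u k i)
    (hx : ∀ k i (ℓ : Fin Δ), x (k + 1) i ℓ.succ =
      (insert i (G.neighborFinset i)).sup' (insert_nonempty i _)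
        (fun j => x k j ℓ.castSucc)) :
    ∀ (ℓ : Fin (Δ + 1)) (k : ℕ), (ℓ : ℕ) + 1 ≤ k → ∀ i : V,
      x k i ℓ =
        (Finset.univ.filter fun j => G.dist i j ≤ (ℓ : ℕ)).sup'
          ⟨i, Finset.mem_filter.mpr ⟨Finset.mem_univ i, by simp [SimpleGraph.dist_self]⟩⟩
          (u (k - (ℓ : ℕ) - 1)) := by
  have hballne : ∀ (n : ℕ) (i : V),
      (Finset.univ.filter fun j => G.dist i j ≤ n).Nonempty :=
    fun n i => ⟨i, Finset.mem_filter.mpr ⟨Finset.mem_univ i, by simp [SimpleGraph.dist_self]⟩⟩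
  have main : ∀ (ℓ : ℕ) (h : ℓ ≤ Δ) (k : ℕ), ℓ + 1 ≤ k → ∀ i : V,
      x k i ⟨ℓ, Nat.lt_succ_of_le h⟩ =
        (Finset.univ.filter fun j => G.dist i j ≤ ℓ).sup' (hballne ℓ i) (u (k - ℓ - 1)) := by
    intro ℓ
    induction ℓ with
    | zero =>
      intro h k hk i
      obtain ⟨k', rfl⟩ : ∃ k', k = k' + 1 := ⟨k - 1, by omega⟩
      have hball : (Finset.univ.filter fun j => G.dist i j ≤ 0) = {i} := by
        ext j
        simp only [Finset.mem_filter, Finset.mem_univ, true_and, Finset.mem_singleton,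
          Nat.le_zero, hconn.dist_eq_zero_iff]
        exact ⟨Eq.symm, Eq.symm⟩
      have : x (k' + 1) i ⟨0, Nat.lt_succ_of_le h⟩ = u k' i := hx0 k' i
      rw [this]
      rw [Finset.sup'_congr (hballne 0 i) hball (fun _ _ => rfl)]
      simp
    | succ ℓ ih =>
      intro h k hk i
      obtain ⟨k', rfl⟩ : ∃ k', k = k' + 1 := ⟨k - 1, by omega⟩
      have hk' : ℓ + 1 ≤ k' := by omega
      have hℓΔ : ℓ < Δ := by omega
      have hstep := hx k' i ⟨ℓ, hℓΔ⟩
      have hsucc : (⟨ℓ, hℓΔ⟩ : Fin Δ).succ = ⟨ℓ + 1, Nat.lt_succ_of_le h⟩ := rfl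
      have hcast : (⟨ℓ, hℓΔ⟩ : Fin Δ).castSucc = ⟨ℓ, Nat.lt_succ_of_le (by omega)⟩ := rfl
      rw [hsucc, hcast] at hstep
      rw [hstep]
      have hrw : ∀ j ∈ insert i (G.neighborFinset i),
          x k' j ⟨ℓ, Nat.lt_succ_of_le (by omega)⟩ =
            (Finset.univ.filter fun m => G.dist j m ≤ ℓ).sup' (hballne ℓ j)
              (u (k' - ℓ - 1)) := fun j _ => ih (by omega) k' hk' j
      rw [Finset.sup'_congr (insert_nonempty i _) rfl hrw]
      have htime : k' - ℓ - 1 = k' + 1 - (ℓ + 1) - 1 := by omega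
      rw [htime]
      apply le_antisymm
      · apply Finset.sup'_le
        intro j hj
        apply Finset.sup'_le
        intro m hm
        apply Finset.le_sup'
        rw [Finset.mem_filter]
        refine ⟨Finset.mem_univ m, ?_⟩
        have hjm : G.dist j m ≤ ℓ := (Finset.mem_filter.mp hm).2
        have hij : G.dist i j ≤ 1 := by
          rcases Finset.mem_insert.mp hj with rfl | hj
          · simp [SimpleGraph.dist_self]
          · exact le_of_eq (SimpleGraph.dist_eq_one_iff_adj.mpr
              ((G.mem_neighborFinset i j).mp hj))
        calc G.dist i m ≤ G.dist i j + G.dist j m := hconn.dist_triangle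
          _ ≤ 1 + ℓ := add_le_add hij hjm
          _ = ℓ + 1 := by omega
      · apply Finset.sup'_le
        intro m hm
        have hdm : G.dist i m ≤ ℓ + 1 := (Finset.mem_filter.mp hm).2
        by_cases hcase : G.dist i m ≤ ℓ
        · exact Finset.le_sup'_of_le _ (Finset.mem_insert_self i _)
            (Finset.le_sup' _ (Finset.mem_filter.mpr ⟨Finset.mem_univ m, hcase⟩))
        · have heq : G.dist i m = ℓ + 1 := by omega
          obtain ⟨p, hp⟩ := hconn.exists_walk_length_eq_dist i m
          rw [heq] at hp
          cases p with
          | nil => simp at hp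
          | cons hadj q =>
            rename_i b
            have hbm : G.dist b m ≤ ℓ := by
              have := SimpleGraph.dist_le q
              simp only [SimpleGraph.Walk.length_cons, Nat.add_right_cancel_iff] at hp
              omega
            exact Finset.le_sup'_of_le _
              (Finset.mem_insert_of_mem ((G.mem_neighborFinset i b).mpr hadj))
              (Finset.le_sup' _ (Finset.mem_filter.mpr ⟨Finset.mem_univ m, hbm⟩))
  intro ℓ k hk i
  have := main (ℓ : ℕ) (by omega) k hk i
  rwa [Fin.eta] at this
end

section
/- Expected value of the worst-case ADMC size estimator: let n, p be natural numbers with n ≥ 1 and p ≥ 2, let ε > 0 be real, and set β = n·p. Then the expectation of 1/(X + ε) for X a Gamma random variable with shape p and rate β equals ε^{p−1}·e^{εβ}·β^p·Γ(1−p, εβ), expressed as the integral identity ∫₀^∞ (β^p / (p−1)!) · x^{p−1} · e^{−βx} / (x + ε) dx = ε^{p−1} · e^{εβ} · β^p · ∫_{εβ}^∞ t^{−p} · e^{−t} dt. -/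
/-!
Splitting `x ^ (k + 1) / (x + ε) = x ^ k - ε * x ^ k / (x + ε)` writes the integral for the
power `k + 1` as the Gamma integral `k! / β ^ (k + 1)` minus `ε` times the integral for the
power `k`. Integration by parts gives the same recursion for the upper incomplete gamma function,
`k Γ(-k, c) = c⁻ᵏ e⁻ᶜ - Γ(1 - k, c)`, so the identity follows by induction on the power; for
`k = 0` it is the substitution `t = β (x + ε)`.
-/

open MeasureTheory Set Filter Topology Real
open scoped Nat

theorem setIntegral_Ioi_comp_add_right {E : Type*} [NormedAddCommGroup E] [NormedSpace ℝ E]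
    (f : ℝ → E) (a d : ℝ) :
    ∫ x in Ioi a, f (x + d) = ∫ x in Ioi (a + d), f x := by
  simpa using (measurePreserving_add_right volume d).setIntegral_preimage_emb
    (measurableEmbedding_addRight d) f (Ioi (a + d))

section IncompleteGamma

variable {c : ℝ}

theorem integrableOn_Ioi_zpow_neg_mul_exp_neg (hc : 0 < c) (k : ℕ) :
    IntegrableOn (fun t : ℝ => t ^ (-(k : ℤ)) * exp (-t)) (Ioi c) := by
  refine Integrable.mono' ((exp_neg_integrableOn_Ioi c one_pos).const_mul (c ^ k)⁻¹)
    (by fun_prop) ?_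
  filter_upwards [ae_restrict_mem measurableSet_Ioi] with t (ht : c < t)
  have ht0 : 0 < t := hc.trans ht
  rw [norm_of_nonneg (by positivity), zpow_neg, zpow_natCast, neg_one_mul]
  gcongr

theorem tendsto_zpow_neg_mul_exp_neg_atTop (k : ℕ) :
    Tendsto (fun t : ℝ => t ^ (-(k : ℤ)) * exp (-t)) atTop (𝓝 0) := by
  rcases k.eq_zero_or_pos with rfl | hk
  · simpa using tendsto_exp_neg_atTop_nhds_zero
  · simpa using (tendsto_zpow_atTop_zero (n := -(k : ℤ)) (by omega)).mul
      tendsto_exp_neg_atTop_nhds_zero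

theorem natCast_mul_integral_Ioi_zpow_neg_succ_mul_exp_neg (hc : 0 < c) (k : ℕ) :
    k * ∫ t in Ioi c, t ^ (-((k + 1 : ℕ) : ℤ)) * exp (-t)
      = c ^ (-(k : ℤ)) * exp (-c) - ∫ t in Ioi c, t ^ (-(k : ℤ)) * exp (-t) := by
  have hderiv : ∀ t ∈ Ici c, HasDerivAt (fun t => -(t ^ (-(k : ℤ)) * exp (-t)))
      (k * (t ^ (-((k + 1 : ℕ) : ℤ)) * exp (-t)) + t ^ (-(k : ℤ)) * exp (-t)) t := by
    intro t ht
    refine (((hasDerivAt_zpow (-(k : ℤ)) t (Or.inl (hc.trans_le ht).ne')).mul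
      (hasDerivAt_neg t).exp).neg).congr_deriv ?_
    rw [show -((k + 1 : ℕ) : ℤ) = -(k : ℤ) - 1 by push_cast; ring]
    push_cast
    ring
  have hint := ((integrableOn_Ioi_zpow_neg_mul_exp_neg hc (k + 1)).const_mul (k : ℝ)).add
    (integrableOn_Ioi_zpow_neg_mul_exp_neg hc k)
  have := integral_Ioi_of_hasDerivAt_of_tendsto' hderiv hint
    (tendsto_zpow_neg_mul_exp_neg_atTop k).neg
  rw [integral_add ((integrableOn_Ioi_zpow_neg_mul_exp_neg hc (k + 1)).const_mul _)
    (integrableOn_Ioi_zpow_neg_mul_exp_neg hc k), integral_const_mul] at this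
  linarith

end IncompleteGamma

section ShiftedReciprocal

variable {β ε : ℝ}

theorem integrableOn_Ioi_pow_mul_exp_neg_mul (hβ : 0 < β) (k : ℕ) :
    IntegrableOn (fun x : ℝ => x ^ k * exp (-β * x)) (Ioi 0) := by
  refine (integrableOn_rpow_mul_exp_neg_mul_rpow (s := k) (p := 1)
    (neg_one_lt_zero.trans_le k.cast_nonneg) one_pos hβ).congr_fun (fun x _ => ?_)
    measurableSet_Ioi
  simp [rpow_natCast]

theorem integral_Ioi_pow_mul_exp_neg_mul (hβ : 0 < β) (k : ℕ) :
    ∫ x in Ioi (0 : ℝ), x ^ k * exp (-β * x) = k ! / β ^ (k + 1) := by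
  have := integral_rpow_mul_exp_neg_mul_Ioi (a := k + 1) (by positivity) hβ
  rw [add_sub_cancel_right, Gamma_nat_eq_factorial, ← Nat.cast_succ, rpow_natCast] at this
  simpa [rpow_natCast, div_eq_inv_mul] using this

theorem integrableOn_Ioi_pow_mul_exp_neg_mul_div_add (hβ : 0 < β) (hε : 0 < ε) (k : ℕ) :
    IntegrableOn (fun x : ℝ => x ^ k * exp (-β * x) / (x + ε)) (Ioi 0) := by
  have hmeas : Measurable fun x : ℝ => x ^ k * exp (-β * x) / (x + ε) := by fun_prop
  refine Integrable.mono' ((integrableOn_Ioi_pow_mul_exp_neg_mul hβ k).div_const ε)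
    hmeas.aestronglyMeasurable ?_
  filter_upwards [ae_restrict_mem measurableSet_Ioi] with x (hx : 0 < x)
  rw [norm_of_nonneg (by positivity)]
  gcongr
  linarith

theorem integral_Ioi_exp_neg_mul_div_add (hβ : 0 < β) (hε : 0 < ε) :
    ∫ x in Ioi (0 : ℝ), exp (-β * x) / (x + ε)
      = exp (ε * β) * ∫ t in Ioi (ε * β), t ^ (-(1 : ℤ)) * exp (-t) := by
  set g : ℝ → ℝ := fun t => t ^ (-(1 : ℤ)) * exp (-t)
  have hsubst : ∀ x ∈ Ioi (0 : ℝ),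
      exp (-β * x) / (x + ε) = exp (ε * β) * (β * g (β * (x + ε))) := by
    intro x (hx : 0 < x)
    have : exp (-(β * (x + ε))) = exp (-β * x) / exp (ε * β) := by
      rw [← exp_sub]; ring_nf
    simp only [g, zpow_neg_one, this]
    field_simp
  calc ∫ x in Ioi (0 : ℝ), exp (-β * x) / (x + ε)
      = exp (ε * β) * (β * ∫ x in Ioi (0 : ℝ), g (β * (x + ε))) := by
        rw [setIntegral_congr_fun measurableSet_Ioi hsubst, integral_const_mul,
          integral_const_mul]
    _ = exp (ε * β) * ∫ t in Ioi (β * ε), g t := by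
        rw [setIntegral_Ioi_comp_add_right (fun y => g (β * y)), zero_add,
          ← smul_eq_mul β, integral_comp_mul_left_Ioi' g ε hβ]
    _ = exp (ε * β) * ∫ t in Ioi (ε * β), g t := by rw [mul_comm β]

theorem integral_Ioi_pow_mul_exp_neg_mul_div_add (hβ : 0 < β) (hε : 0 < ε) (k : ℕ) :
    ∫ x in Ioi (0 : ℝ), x ^ k * exp (-β * x) / (x + ε)
      = k ! * ε ^ k * exp (ε * β) *
          ∫ t in Ioi (ε * β), t ^ (-((k + 1 : ℕ) : ℤ)) * exp (-t) := by
  induction k with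
  | zero => simpa using integral_Ioi_exp_neg_mul_div_add hβ hε
  | succ k ih =>
    have hsplit : ∀ x ∈ Ioi (0 : ℝ), x ^ (k + 1) * exp (-β * x) / (x + ε)
        = x ^ k * exp (-β * x) - ε * (x ^ k * exp (-β * x) / (x + ε)) := by
      intro x (hx : 0 < x)
      field_simp
      ring
    have hrec := natCast_mul_integral_Ioi_zpow_neg_succ_mul_exp_neg (mul_pos hε hβ) (k + 1)
    rw [setIntegral_congr_fun measurableSet_Ioi hsplit, integral_sub
      (integrableOn_Ioi_pow_mul_exp_neg_mul hβ k)
      ((integrableOn_Ioi_pow_mul_exp_neg_mul_div_add hβ hε k).const_mul ε),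
      integral_const_mul, integral_Ioi_pow_mul_exp_neg_mul hβ k, ih]
    calc (k ! / β ^ (k + 1) : ℝ) - ε * (k ! * ε ^ k * exp (ε * β) *
          ∫ t in Ioi (ε * β), t ^ (-((k + 1 : ℕ) : ℤ)) * exp (-t))
        = k ! * ε ^ (k + 1) * exp (ε * β) * ((ε * β) ^ (-((k + 1 : ℕ) : ℤ)) * exp (-(ε * β))
          - ∫ t in Ioi (ε * β), t ^ (-((k + 1 : ℕ) : ℤ)) * exp (-t)) := by
          rw [zpow_neg, zpow_natCast, exp_neg]
          field_simp
          ring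
      _ = (k + 1)! * ε ^ (k + 1) * exp (ε * β) *
          ∫ t in Ioi (ε * β), t ^ (-((k + 1 + 1 : ℕ) : ℤ)) * exp (-t) := by
          rw [← hrec, Nat.factorial_succ]
          push_cast
          ring

end ShiftedReciprocal

/-- Expected value of 1/(X+ε) for X ~ Gamma(p, β) with β = n·p, expressed via the
upper incomplete gamma function: ∫₀^∞ βᵖ x^{p−1} e^{−βx}/((p−1)!·(x+ε)) dx
= ε^{p−1} e^{εβ} βᵖ ∫_{εβ}^∞ t^{−p} e^{−t} dt. -/
theorem gamma_shifted_reciprocal_expectation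
    (n p : ℕ) (hn : 1 ≤ n) (hp : 2 ≤ p)
    (ε : ℝ) (hε : 0 < ε)
    (β : ℝ) (hβ : β = (n : ℝ) * p) :
    ∫ x in Set.Ioi (0 : ℝ),
        (β ^ p / (Nat.factorial (p - 1) : ℝ)) * x ^ (p - 1) * Real.exp (-β * x) / (x + ε)
      = ε ^ (p - 1) * Real.exp (ε * β) * β ^ p *
        ∫ t in Set.Ioi (ε * β), t ^ (-(p : ℤ)) * Real.exp (-t) := by
  have hβ0 : 0 < β := hβ ▸ mul_pos (by exact_mod_cast hn) (by exact_mod_cast (by omega : 0 < p))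
  obtain ⟨k, rfl⟩ : ∃ k, p = k + 1 := ⟨p - 1, by omega⟩
  simp_rw [Nat.add_sub_cancel, mul_assoc _ (_ ^ k), mul_div_assoc _ (_ ^ k * _)]
  rw [integral_const_mul, integral_Ioi_pow_mul_exp_neg_mul_div_add hβ0 hε k]
  field_simp
end
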